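/- For every finite simple graph G, ker(G) equals the union of all inclusion-minimal independent sets S with d(S) > 0; that is, ker(G) = ∪{S : S is independent, d(S) > 0, and no proper subset S' ⊊ S satisfies both that S' is independent and d(S') > 0}. -/

import Mathlib

open Finset

namespace CritGraph

variable {V : Type*} [Fintype V] [DecidableEq V]

/-- The neighborhood of a set of vertices `X`:
all vertices having at least one neighbor in `X`. -/
def nbhd (G : SimpleGraph V) [DecidableRel G.Adj] (X : Finset V) : Finset V :=
  univ.filter fun v => ∃ x ∈ X, G.Adj v x

/-- The difference `d(X) = |X| - |N(X)|` of a set of vertices `X`. -/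
def diff (G : SimpleGraph V) [DecidableRel G.Adj] (X : Finset V) : ℤ :=
  (X.card : ℤ) - ((nbhd G X).card : ℤ)

/-- A set of vertices is independent if no two of its vertices are adjacent. -/
def IsIndep (G : SimpleGraph V) (S : Finset V) : Prop :=
  ∀ u ∈ S, ∀ v ∈ S, ¬ G.Adj u v

instance (G : SimpleGraph V) [DecidableRel G.Adj] : DecidablePred (IsIndep G) := fun S =>
  inferInstanceAs (Decidable (∀ u ∈ S, ∀ v ∈ S, ¬ G.Adj u v))

/-- The critical difference `d_c(G) = max {d(X) : X ⊆ V}`. -/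
def dC (G : SimpleGraph V) [DecidableRel G.Adj] : ℤ :=
  (univ : Finset V).powerset.sup' (Finset.powerset_nonempty _) (diff G)

/-- The critical independence difference `id_c(G) = max {d(I) : I independent}`. -/
def idC (G : SimpleGraph V) [DecidableRel G.Adj] : ℤ :=
  ((univ : Finset V).powerset.filter (IsIndep G)).sup'
    ⟨∅, by simp [IsIndep]⟩ (diff G)

/-- `A` is a critical independent set: `A` is independent and
`d(A) = max {d(I) : I independent}`. -/
def IsCritIndep (G : SimpleGraph V) [DecidableRel G.Adj] (A : Finset V) : Prop :=
  IsIndep G A ∧ ∀ I : Finset V, IsIndep G I → diff G I ≤ diff G A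

instance (G : SimpleGraph V) [DecidableRel G.Adj] : DecidablePred (IsCritIndep G) := fun A =>
  inferInstanceAs (Decidable (IsIndep G A ∧ ∀ I : Finset V, IsIndep G I → diff G I ≤ diff G A))

/-- `ker(G)`: the intersection of all critical independent sets of `G`. -/
def kerG (G : SimpleGraph V) [DecidableRel G.Adj] : Finset V :=
  univ.filter fun v => ∀ A : Finset V, IsCritIndep G A → v ∈ A

/-- `G - v`: the induced subgraph of `G` on `V \ {v}`. -/
def deleteVert (G : SimpleGraph V) (v : V) : SimpleGraph {u : V // u ≠ v} :=
  G.comap Subtype.val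

instance (G : SimpleGraph V) (v : V) [DecidableRel G.Adj] :
    DecidableRel (deleteVert G v).Adj := fun a b =>
  inferInstanceAs (Decidable (G.Adj a.val b.val))

/-- `S` is an inclusion-minimal independent set with positive difference. -/
def MinPosIndep (G : SimpleGraph V) [DecidableRel G.Adj] (S : Finset V) : Prop :=
  IsIndep G S ∧ 0 < diff G S ∧ ∀ S' ⊂ S, ¬ (IsIndep G S' ∧ 0 < diff G S')

/-- `S` is a maximum independent set. -/
def IsMaxIndep (G : SimpleGraph V) (S : Finset V) : Prop :=
  IsIndep G S ∧ ∀ I : Finset V, IsIndep G I → I.card ≤ S.card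

instance (G : SimpleGraph V) [DecidableRel G.Adj] : DecidablePred (IsMaxIndep G) := fun S =>
  inferInstanceAs (Decidable (IsIndep G S ∧ ∀ I : Finset V, IsIndep G I → I.card ≤ S.card))

/-- `core(G)`: the intersection of all maximum independent sets of `G`. -/
def coreG (G : SimpleGraph V) [DecidableRel G.Adj] : Finset V :=
  univ.filter fun v => ∀ A : Finset V, IsMaxIndep G A → v ∈ A

end CritGraph

/-!
Since `d` is supermodular and every set can be shrunk to an independent one of no smaller
difference, critical independent sets are closed under intersection; so `ker(G)` is the least
of them and every proper subset of it has smaller difference. A minimal positive independent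
set `S` lies in every critical `A`, because `d(A ∩ S) ≥ d(S) > 0`. Conversely, the strict
maximality of `d(ker G)` is Hall's condition with surplus one for the bipartite graph between
`ker(G)` and its neighbourhood, so for `x ∈ ker(G)` the neighbourhood is matched into
`ker(G) - x`. Following the matching back from `x` yields a set of positive difference whose
subsets avoiding `x` have nonpositive difference, and a minimal positive subset of it
containing `x` is a minimal positive independent set.
-/

namespace CritGraph

variable {V : Type*}

lemma IsIndep.mono {G : SimpleGraph V} {X Y : Finset V} (h : X ⊆ Y) (hY : IsIndep G Y) :
    IsIndep G X :=
  fun u hu v hv => hY u (h hu) v (h hv)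

variable [Fintype V]

section

variable (G : SimpleGraph V) [DecidableRel G.Adj]

lemma mem_nbhd {X : Finset V} {v : V} : v ∈ nbhd G X ↔ ∃ x ∈ X, G.Adj v x := by
  simp [nbhd]

lemma nbhd_mono {X Y : Finset V} (h : X ⊆ Y) : nbhd G X ⊆ nbhd G Y := by
  intro v hv
  obtain ⟨x, hx, hadj⟩ := (mem_nbhd G).1 hv
  exact (mem_nbhd G).2 ⟨x, h hx, hadj⟩

variable [DecidableEq V]

lemma exists_isCritIndep : ∃ A : Finset V, IsCritIndep G A := by
  obtain ⟨A, hA, hmax⟩ := exists_max_image ((univ : Finset V).powerset.filter (IsIndep G))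
    (diff G) ⟨∅, by simp [IsIndep]⟩
  exact ⟨A, (mem_filter.1 hA).2, fun I hI => hmax I (by simp [hI])⟩

lemma nbhd_union (X Y : Finset V) : nbhd G (X ∪ Y) = nbhd G X ∪ nbhd G Y := by
  ext v
  simp only [mem_nbhd, mem_union, or_and_right, exists_or]

lemma diff_add_diff_le_diff_union_add_diff_inter (X Y : Finset V) :
    diff G X + diff G Y ≤ diff G (X ∪ Y) + diff G (X ∩ Y) := by
  have hnbhd_inter : nbhd G (X ∩ Y) ⊆ nbhd G X ∩ nbhd G Y :=
    subset_inter (nbhd_mono G inter_subset_left) (nbhd_mono G inter_subset_right)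
  have hcard := card_union_add_card_inter X Y
  have hcard_nbhd := card_union_add_card_inter (nbhd G X) (nbhd G Y)
  have hcard_inter := card_le_card hnbhd_inter
  simp only [diff, nbhd_union]
  omega

lemma isIndep_sdiff_nbhd (X : Finset V) : IsIndep G (X \ nbhd G X) := by
  intro u hu v hv hadj
  exact (mem_sdiff.1 hu).2 ((mem_nbhd G).2 ⟨v, (mem_sdiff.1 hv).1, hadj⟩)

/-- The vertices of `X ∩ N(X)` leave `N(X)` too when they are deleted from `X`. -/
lemma diff_le_diff_sdiff_nbhd (X : Finset V) : diff G X ≤ diff G (X \ nbhd G X) := by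
  have hnbhd : nbhd G (X \ nbhd G X) ⊆ nbhd G X \ (X ∩ nbhd G X) := by
    intro w hw
    obtain ⟨a, ha, hadj⟩ := (mem_nbhd G).1 hw
    refine mem_sdiff.2 ⟨(mem_nbhd G).2 ⟨a, (mem_sdiff.1 ha).1, hadj⟩, fun hwC => ?_⟩
    exact (mem_sdiff.1 ha).2 ((mem_nbhd G).2 ⟨w, (mem_inter.1 hwC).1, hadj.symm⟩)
  have hcard : #(X \ nbhd G X) = #X - #(X ∩ nbhd G X) := by
    rw [← sdiff_inter_self_left, card_sdiff_of_subset inter_subset_left]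
  have hcard_nbhd := (card_le_card hnbhd).trans_eq (card_sdiff_of_subset inter_subset_right)
  have hle_left := card_le_card (inter_subset_left : X ∩ nbhd G X ⊆ X)
  have hle_right := card_le_card (inter_subset_right : X ∩ nbhd G X ⊆ nbhd G X)
  simp only [diff]
  omega

lemma IsCritIndep.diff_le {A : Finset V} (hA : IsCritIndep G A) (X : Finset V) :
    diff G X ≤ diff G A :=
  (diff_le_diff_sdiff_nbhd G X).trans (hA.2 _ (isIndep_sdiff_nbhd G X))

lemma IsCritIndep.inter {A B : Finset V} (hA : IsCritIndep G A) (hB : IsCritIndep G B) :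
    IsCritIndep G (A ∩ B) := by
  have hsuper := diff_add_diff_le_diff_union_add_diff_inter G A B
  have hunion := hB.diff_le G (A ∪ B)
  have hBA := hA.2 B hB.1
  exact ⟨hA.1.mono inter_subset_left, fun I hI => by linarith [hA.2 I hI]⟩

lemma mem_kerG {v : V} : v ∈ kerG G ↔ ∀ A, IsCritIndep G A → v ∈ A := by
  simp [kerG]

lemma kerG_subset {A : Finset V} (hA : IsCritIndep G A) : kerG G ⊆ A :=
  fun _ hv => (mem_kerG G).1 hv A hA

/-- An inclusion-minimal critical independent set lies in every other one, since critical
independent sets are closed under intersection; so it is `ker(G)`. -/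
lemma isCritIndep_kerG : IsCritIndep G (kerG G) := by
  obtain ⟨A₀, hA₀⟩ := exists_isCritIndep G
  obtain ⟨A, -, hA, hA_min⟩ := exists_minimal_le_of_wellFoundedLT (IsCritIndep G) A₀ hA₀
  have hA_sub : A ⊆ kerG G := fun v hv => (mem_kerG G).2 fun B hB =>
    (mem_inter.1 (hA_min (hA.inter G hB) inter_subset_left hv)).2
  rwa [(kerG_subset G hA).antisymm hA_sub]

lemma diff_lt_diff_kerG {A : Finset V} (hA : A ⊂ kerG G) : diff G A < diff G (kerG G) := by
  have hK := isCritIndep_kerG G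
  refine (hK.diff_le G A).lt_of_ne fun heq => hA.not_subset (kerG_subset G ?_)
  exact ⟨hK.1.mono hA.subset, fun I hI => (hK.2 I hI).trans_eq heq.symm⟩

lemma MinPosIndep.subset_kerG {S : Finset V} (hS : MinPosIndep G S) : S ⊆ kerG G := by
  obtain ⟨hS_indep, hS_pos, hS_min⟩ := hS
  intro v hv
  refine (mem_kerG G).2 fun A hA => ?_
  have hsuper := diff_add_diff_le_diff_union_add_diff_inter G A S
  have hunion := hA.diff_le G (A ∪ S)
  have hAS : A ∩ S = S := by
    by_contra hne
    exact hS_min (A ∩ S) (ssubset_of_subset_of_ne inter_subset_right hne)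
      ⟨hS_indep.mono inter_subset_right, by omega⟩
  exact inter_eq_right.1 hAS hv

/-- The vertices of `K` with no neighbour in `W` form a proper subset of `K` whose
neighbourhood misses `W`; comparing its difference with `d(K)` gives the surplus. -/
lemma card_lt_card_filter_adj {K W : Finset V} (hK : ∀ A ⊂ K, diff G A < diff G K)
    (hW : W ⊆ nbhd G K) (hW_ne : W.Nonempty) :
    #W < #(K.filter fun k => ∃ w ∈ W, G.Adj k w) := by
  set A := K.filter fun k => ¬ ∃ w ∈ W, G.Adj k w
  obtain ⟨w₀, hw₀⟩ := hW_ne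
  obtain ⟨k₀, hk₀, hadj₀⟩ := (mem_nbhd G).1 (hW hw₀)
  have hA : A ⊂ K := ssubset_of_subset_of_ne (filter_subset _ _) fun h =>
    (mem_filter.1 (h ▸ hk₀ : k₀ ∈ A)).2 ⟨w₀, hw₀, hadj₀.symm⟩
  have hnbhd : nbhd G A ⊆ nbhd G K \ W := by
    intro w hw
    obtain ⟨a, ha, hadj⟩ := (mem_nbhd G).1 hw
    exact mem_sdiff.2 ⟨(mem_nbhd G).2 ⟨a, (mem_filter.1 ha).1, hadj⟩,
      fun hwW => (mem_filter.1 ha).2 ⟨w, hwW, hadj.symm⟩⟩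
  have hsplit : #(K.filter fun k => ∃ w ∈ W, G.Adj k w) + #A = #K :=
    card_filter_add_card_filter_not _
  have hcard_nbhd := (card_le_card hnbhd).trans_eq (card_sdiff_of_subset hW)
  have hW_le := card_le_card hW
  have hA_lt := hK A hA
  simp only [diff] at hA_lt
  omega

lemma exists_injOn_nbhd {K : Finset V} (hK : ∀ A ⊂ K, diff G A < diff G K) (x : V) :
    ∃ f : V → V, Set.InjOn f (nbhd G K) ∧
      ∀ w ∈ nbhd G K, f w ∈ K.erase x ∧ G.Adj (f w) w := by
  let t : nbhd G K → Finset V := fun w => (K.filter (G.Adj · w)).erase x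
  have hall : ∀ s : Finset (nbhd G K), #s ≤ #(s.biUnion t) := by
    intro s
    rcases s.eq_empty_or_nonempty with rfl | hs
    · simp
    set B := K.filter fun k => ∃ w ∈ s.image Subtype.val, G.Adj k w
    have hB : #s < #B := by
      rw [← card_image_of_injective s Subtype.val_injective]
      exact card_lt_card_filter_adj G hK (fun w hw => by
          obtain ⟨w', -, rfl⟩ := mem_image.1 hw; exact w'.2) (hs.image Subtype.val)
    have hsub : B.erase x ⊆ s.biUnion t := by
      intro k hk
      simp only [B, t, mem_erase, mem_filter, mem_image, mem_biUnion] at hk ⊢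
      obtain ⟨hkx, hkK, _, ⟨w, hws, rfl⟩, hadj⟩ := hk
      exact ⟨w, hws, hkx, hkK, hadj⟩
    have herase := pred_card_le_card_erase (s := B) (a := x)
    have hle := card_le_card hsub
    omega
  obtain ⟨f, hf_inj, hf⟩ := (all_card_le_biUnion_card_iff_exists_injective t).1 hall
  refine ⟨fun w => if h : w ∈ nbhd G K then f ⟨w, h⟩ else w, ?_, fun w hw => ?_⟩
  · intro w₁ h₁ w₂ h₂ heq
    simp only [mem_coe] at h₁ h₂
    simp only [dif_pos h₁, dif_pos h₂] at heq
    exact congrArg Subtype.val (hf_inj heq)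
  · simpa [dif_pos hw, t, and_assoc] using hf ⟨w, hw⟩

/-- With `f` a matching of `N(K)` into `K - x`, let `S` be a minimal subset of `K` containing `x`
and closed under `w ↦ f w` for `w ∈ N(S)`. Then `f` maps `N(S)` into `S - x`, and by minimality
onto it, so every `T ⊆ S - x` is matched into `N(T)`. -/
lemma exists_pos_diff_forall_notMem_diff_nonpos {K : Finset V}
    (hK : ∀ A ⊂ K, diff G A < diff G K) {x : V} (hx : x ∈ K) :
    ∃ S ⊆ K, x ∈ S ∧ 0 < diff G S ∧ ∀ T ⊆ S, x ∉ T → diff G T ≤ 0 := by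
  obtain ⟨f, hf_inj, hf⟩ := exists_injOn_nbhd G hK x
  let Closed : Finset V → Prop := fun S => S ⊆ K ∧ x ∈ S ∧ ∀ w ∈ nbhd G S, f w ∈ S
  have hK_closed : Closed K := ⟨subset_rfl, hx, fun w hw => (mem_erase.1 (hf w hw).1).2⟩
  obtain ⟨S, -, ⟨hSK, hxS, hS_closed⟩, hS_min⟩ :=
    exists_minimal_le_of_wellFoundedLT Closed K hK_closed
  have hS_surj : ∀ a ∈ S, a ≠ x → ∃ w ∈ nbhd G S, f w = a := by
    intro a ha hax
    by_contra! hne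
    have hsub : S.erase a ⊆ S := erase_subset a S
    have h_closed : Closed (S.erase a) := ⟨hsub.trans hSK, mem_erase.2 ⟨hax.symm, hxS⟩,
      fun w hw => mem_erase.2 ⟨hne w (nbhd_mono G hsub hw), hS_closed w (nbhd_mono G hsub hw)⟩⟩
    exact notMem_erase a S (hS_min h_closed hsub ha)
  refine ⟨S, hSK, hxS, ?_, fun T hTS hxT => ?_⟩
  · have hS_le : #(nbhd G S) ≤ #(S.erase x) := card_le_card_of_injOn f
      (fun w hw => mem_erase.2 ⟨(mem_erase.1 (hf w (nbhd_mono G hSK hw)).1).1, hS_closed w hw⟩)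
      (hf_inj.mono (by simpa using nbhd_mono G hSK))
    have herase := card_erase_of_mem hxS
    have hS_ne := card_pos.2 ⟨x, hxS⟩
    simp only [diff]
    omega
  · have hT_sub : T ⊆ (nbhd G T).image f := by
      intro a ha
      obtain ⟨w, hw, rfl⟩ := hS_surj a (hTS ha) (ne_of_mem_of_not_mem ha hxT)
      exact mem_image_of_mem f ((mem_nbhd G).2 ⟨f w, ha, (hf w (nbhd_mono G hSK hw)).2.symm⟩)
    have hT_le := (card_le_card hT_sub).trans card_image_le
    simp only [diff]
    omega

lemma exists_minPosIndep_mem {S : Finset V} {x : V} (hS : IsIndep G S) (hxS : x ∈ S)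
    (hS_pos : 0 < diff G S) (hS_nonpos : ∀ T ⊆ S, x ∉ T → diff G T ≤ 0) :
    ∃ S' : Finset V, MinPosIndep G S' ∧ x ∈ S' := by
  obtain ⟨S', hS'S, ⟨hxS', hS'_pos⟩, hS'_min⟩ :=
    exists_minimal_le_of_wellFoundedLT (fun T => x ∈ T ∧ 0 < diff G T) S ⟨hxS, hS_pos⟩
  refine ⟨S', ⟨hS.mono hS'S, hS'_pos, fun T hT ⟨_, hT_pos⟩ => ?_⟩, hxS'⟩
  by_cases hxT : x ∈ T
  · exact hT.not_subset (hS'_min ⟨hxT, hT_pos⟩ hT.subset)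
  · exact absurd hT_pos (not_lt.2 (hS_nonpos T (hT.subset.trans hS'S) hxT))

end

variable [DecidableEq V]

/-- `ker(G)` equals the union of all inclusion-minimal independent sets `S`
with `d(S) > 0`. -/
theorem kerG_eq_union_minPosIndep (G : SimpleGraph V) [DecidableRel G.Adj] :
    (kerG G : Set V) = ⋃ S ∈ {S : Finset V | MinPosIndep G S}, (S : Set V) := by
  ext v
  simp only [mem_coe, Set.mem_iUnion, Set.mem_ofPred_eq, exists_prop]
  constructor
  · intro hv
    obtain ⟨S, hSK, hvS, hS_pos, hS_nonpos⟩ :=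
      exists_pos_diff_forall_notMem_diff_nonpos G (fun A hA => diff_lt_diff_kerG G hA) hv
    exact exists_minPosIndep_mem G ((isCritIndep_kerG G).1.mono hSK) hvS hS_pos hS_nonpos
  · rintro ⟨S, hS, hvS⟩
    exact hS.subset_kerG G hvS

end CritGraph
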